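/- Let X₁,…,Xₙ be i.i.d. nonnegative random variables with finite positive mean, S = X₁+⋯+Xₙ, and let I be uniform on {1,…,n} independent of everything. Then the (1,1)-equilibrium transform S* of S has the same distribution as X₁+⋯+X_{I−1} + X_I*, where X_I* is an independent equilibrium-transformed copy. -/

import Mathlib

open MeasureTheory

/-- The law of `V_a`, with density `a x^(a-1)` on `(0,1]`. -/
noncomputable def vLaw (a : ℝ) : Measure ℝ :=
  (volume.restrict (Set.Ioc (0 : ℝ) 1)).withDensity
    (fun u => ENNReal.ofReal (a * u ^ (a - 1)))

/-- The `β`-power bias of a law `μ`. -/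
noncomputable def powerBias (β : ℝ) (μ : Measure ℝ) : Measure ℝ :=
  μ.withDensity (fun x => ENNReal.ofReal (x ^ β / ∫ y, y ^ β ∂μ))

/-- The `(α,β)`-generalized equilibrium transform of `μ`; for `α = β = 1` this is the
usual equilibrium transform `X* = U·X^s`. -/
noncomputable def eqLaw (α β : ℝ) (μ : Measure ℝ) : Measure ℝ :=
  ((vLaw α).prod (powerBias β μ)).map (fun p => p.1 * p.2)

/-- Convolution of two laws on `ℝ` (law of the sum of independent variables). -/
noncomputable def mconv (μ ν : Measure ℝ) : Measure ℝ :=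
  (μ.prod ν).map (fun p => p.1 + p.2)

/-- Law of `X₁ + ⋯ + Xₙ` for i.i.d. variables with law `μ`. -/
noncomputable def sumLaw (μ : Measure ℝ) : ℕ → Measure ℝ
  | 0 => Measure.dirac 0
  | (n + 1) => mconv (sumLaw μ n) μ

/-!
Write `λ` for Lebesgue measure and `m = E X`. Since `X* = U·X^s`,
`P(X* ∈ A) = E[λ(A ∩ (0, X])] / m`. With partial sums `S_0 = 0, …, S_n = S`, the interval
`(0, S]` is the disjoint union of the `(S_i, S_i + X_{i+1}]`, and conditioning on `S_i` the
`i`-th piece contributes `m · P(S_i + X* ∈ A)` to `E[λ(A ∩ (0, S])]`. Taking `A = ℝ` gives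
`E S = n m`; dividing by it leaves the uniform mixture of the laws of `S_i + X*`.
-/

open Set
open scoped ENNReal

lemma vLaw_one : vLaw 1 = volume.restrict (Ioc (0 : ℝ) 1) := by
  simp [vLaw]

instance (α β : ℝ) (μ : Measure ℝ) [SFinite μ] : SFinite (eqLaw α β μ) := by
  unfold eqLaw vLaw powerBias
  infer_instance

instance (κ ρ : Measure ℝ) [IsProbabilityMeasure κ] [IsProbabilityMeasure ρ] :
    IsProbabilityMeasure (mconv κ ρ) :=
  Measure.isProbabilityMeasure_map (by fun_prop)

instance (μ : Measure ℝ) [IsProbabilityMeasure μ] (n : ℕ) : IsProbabilityMeasure (sumLaw μ n) := by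
  induction n with
  | zero => exact Measure.dirac.isProbabilityMeasure
  | succ k ih => exact inferInstanceAs (IsProbabilityMeasure (mconv (sumLaw μ k) μ))

lemma lintegral_mconv (κ ρ : Measure ℝ) [SFinite ρ] {f : ℝ → ℝ≥0∞} (hf : Measurable f) :
    ∫⁻ z, f z ∂(mconv κ ρ) = ∫⁻ s, ∫⁻ x, f (s + x) ∂ρ ∂κ := by
  rw [mconv, lintegral_map hf (by fun_prop), lintegral_prod _ (by fun_prop)]

lemma mconv_apply (κ ρ : Measure ℝ) [SFinite κ] [SFinite ρ] {A : Set ℝ} (hA : MeasurableSet A) :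
    mconv κ ρ A = ∫⁻ s, ρ ((s + ·) ⁻¹' A) ∂κ := by
  have hadd : Measurable fun p : ℝ × ℝ => p.1 + p.2 := by fun_prop
  rw [mconv, Measure.map_apply hadd hA, Measure.prod_apply (hadd hA)]
  rfl

lemma ae_nonneg_mconv {κ ρ : Measure ℝ} [SFinite ρ] (hκ : ∀ᵐ s ∂κ, 0 ≤ s) (hρ : ∀ᵐ x ∂ρ, 0 ≤ x) :
    ∀ᵐ z ∂(mconv κ ρ), 0 ≤ z := by
  rw [mconv, ae_map_iff (by fun_prop) measurableSet_Ici]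
  filter_upwards [Measure.quasiMeasurePreserving_fst.ae hκ,
    Measure.quasiMeasurePreserving_snd.ae hρ] with p hs hx
  exact add_nonneg hs hx

lemma ae_nonneg_sumLaw {μ : Measure ℝ} [SFinite μ] (hμ : ∀ᵐ x ∂μ, 0 ≤ x) (n : ℕ) :
    ∀ᵐ x ∂(sumLaw μ n), 0 ≤ x := by
  induction n with
  | zero => simp [sumLaw]
  | succ k ih => exact ae_nonneg_mconv ih hμ

lemma measure_inter_Ioc_eq_add (ν : Measure ℝ) {A : Set ℝ} (hA : MeasurableSet A) {a b c : ℝ}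
    (hab : a ≤ b) (hbc : b ≤ c) :
    ν (A ∩ Ioc a c) = ν (A ∩ Ioc a b) + ν (A ∩ Ioc b c) := by
  rw [← Ioc_union_Ioc_eq_Ioc hab hbc, inter_union_distrib_left,
    measure_union ((Ioc_disjoint_Ioc_of_le le_rfl).mono inter_subset_right inter_subset_right)
      (hA.inter measurableSet_Ioc)]

lemma measurable_measure_inter_Ioc (ν : Measure ℝ) (A : Set ℝ) (a : ℝ) :
    Measurable fun x => ν (A ∩ Ioc a x) :=
  Monotone.measurable fun _ _ hxy =>
    measure_mono (inter_subset_inter_right _ (Ioc_subset_Ioc_right hxy))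

lemma volume_preimage_const_add_inter_Ioc (A : Set ℝ) (s x : ℝ) :
    volume ((s + ·) ⁻¹' A ∩ Ioc 0 x) = volume (A ∩ Ioc s (s + x)) := by
  have hIoc : Ioc 0 x = (s + ·) ⁻¹' Ioc s (s + x) := by simp [preimage_const_add_Ioc]
  rw [hIoc, ← preimage_inter, measure_preimage_add]

lemma volume_preimage_mul_const_inter_Ioc (A : Set ℝ) {x : ℝ} (hx : 0 < x) :
    volume ((· * x) ⁻¹' A ∩ Ioc 0 1) = ENNReal.ofReal x⁻¹ * volume (A ∩ Ioc 0 x) := by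
  have hIoc : Ioc (0 : ℝ) 1 = (· * x) ⁻¹' Ioc 0 x := by simp [hx, hx.ne']
  rw [hIoc, ← preimage_inter, Real.volume_preimage_mul_right hx.ne', abs_of_pos (inv_pos.2 hx)]

lemma lintegral_ofReal_pos_and_lt_top {ν : Measure ℝ} (hν : ∀ᵐ x ∂ν, 0 ≤ x)
    (hM : 0 < ∫ x, x ∂ν) : 0 < ∫⁻ x, ENNReal.ofReal x ∂ν ∧ ∫⁻ x, ENNReal.ofReal x ∂ν < ∞ := by
  rw [integral_eq_lintegral_of_nonneg_ae hν aestronglyMeasurable_id] at hM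
  exact ENNReal.toReal_pos_iff.1 hM

lemma eqLaw_one_apply {ν : Measure ℝ} [SFinite ν] (hν : ∀ᵐ x ∂ν, 0 ≤ x) (hM : 0 < ∫ x, x ∂ν)
    {A : Set ℝ} (hA : MeasurableSet A) :
    eqLaw 1 1 ν A = (∫⁻ x, ENNReal.ofReal x ∂ν)⁻¹ * ∫⁻ x, volume (A ∩ Ioc 0 x) ∂ν := by
  obtain ⟨hL0, hLtop⟩ := lintegral_ofReal_pos_and_lt_top hν hM
  have hmul : Measurable fun p : ℝ × ℝ => p.1 * p.2 := by fun_prop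
  rw [eqLaw, vLaw_one, powerBias, Measure.map_apply hmul hA, Measure.prod_apply_symm (hmul hA),
    lintegral_withDensity_eq_lintegral_mul _ (by fun_prop)
      (measurable_measure_prodMk_right (hmul hA)),
    ← lintegral_const_mul' _ _ (ENNReal.inv_ne_top.2 hL0.ne')]
  refine lintegral_congr_ae ?_
  simp only [Real.rpow_one, integral_eq_lintegral_of_nonneg_ae hν aestronglyMeasurable_id]
  filter_upwards [hν] with x hx
  rcases hx.eq_or_lt with rfl | hx
  · simp
  have hpre : (fun u => (u, x)) ⁻¹' ((fun p : ℝ × ℝ => p.1 * p.2) ⁻¹' A) = (· * x) ⁻¹' A := rfl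
  rw [Pi.mul_apply, hpre, Measure.restrict_apply (measurable_mul_const x hA),
    volume_preimage_mul_const_inter_Ioc A hx,
    ENNReal.ofReal_div_of_pos (ENNReal.toReal_pos hL0.ne' hLtop.ne), ENNReal.ofReal_toReal hLtop.ne,
    div_eq_mul_inv, ← mul_assoc, mul_right_comm (ENNReal.ofReal x),
    ← ENNReal.ofReal_mul hx.le, mul_inv_cancel₀ hx.ne', ENNReal.ofReal_one, one_mul]

lemma mconv_eqLaw_one_apply (κ : Measure ℝ) [SFinite κ] {ν : Measure ℝ} [SFinite ν]
    (hν : ∀ᵐ x ∂ν, 0 ≤ x) (hM : 0 < ∫ x, x ∂ν) {A : Set ℝ} (hA : MeasurableSet A) :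
    mconv κ (eqLaw 1 1 ν) A
      = (∫⁻ x, ENNReal.ofReal x ∂ν)⁻¹ * ∫⁻ s, ∫⁻ x, volume (A ∩ Ioc s (s + x)) ∂ν ∂κ := by
  have hL0 := (lintegral_ofReal_pos_and_lt_top hν hM).1
  simp only [mconv_apply κ _ hA, eqLaw_one_apply hν hM (measurable_const_add _ hA),
    volume_preimage_const_add_inter_Ioc]
  exact lintegral_const_mul' _ _ (ENNReal.inv_ne_top.2 hL0.ne')

lemma lintegral_volume_inter_Ioc_sumLaw {μ : Measure ℝ} [IsProbabilityMeasure μ]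
    (hμ : ∀ᵐ x ∂μ, 0 ≤ x) {A : Set ℝ} (hA : MeasurableSet A) (n : ℕ) :
    ∫⁻ S, volume (A ∩ Ioc 0 S) ∂(sumLaw μ n)
      = ∑ i ∈ Finset.range n, ∫⁻ s, ∫⁻ x, volume (A ∩ Ioc s (s + x)) ∂μ ∂(sumLaw μ i) := by
  induction n with
  | zero => simp [sumLaw, lintegral_dirac' _ (measurable_measure_inter_Ioc volume A 0)]
  | succ k ih =>
    have hsplit : ∀ᵐ s ∂(sumLaw μ k), ∫⁻ x, volume (A ∩ Ioc 0 (s + x)) ∂μ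
        = volume (A ∩ Ioc 0 s) + ∫⁻ x, volume (A ∩ Ioc s (s + x)) ∂μ := by
      filter_upwards [ae_nonneg_sumLaw hμ k] with s hs
      rw [lintegral_congr_ae (hμ.mono fun x hx =>
          measure_inter_Ioc_eq_add _ hA hs (le_add_of_nonneg_right hx)),
        lintegral_add_left measurable_const, lintegral_const, measure_univ, mul_one]
    rw [sumLaw, lintegral_mconv _ _ (measurable_measure_inter_Ioc volume A 0),
      lintegral_congr_ae hsplit, lintegral_add_left (measurable_measure_inter_Ioc volume A 0), ih,
      Finset.sum_range_succ]

lemma lintegral_ofReal_sumLaw {μ : Measure ℝ} [IsProbabilityMeasure μ] (hμ : ∀ᵐ x ∂μ, 0 ≤ x)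
    (n : ℕ) : ∫⁻ x, ENNReal.ofReal x ∂(sumLaw μ n) = n * ∫⁻ x, ENNReal.ofReal x ∂μ := by
  simpa [Real.volume_Ioc] using lintegral_volume_inter_Ioc_sumLaw hμ MeasurableSet.univ n

theorem stmt11 (μ : Measure ℝ) [IsProbabilityMeasure μ] (n : ℕ) (hn : 1 ≤ n)
    (hsupp : μ (Set.Iio 0) = 0) (hmean : 0 < ∫ x, x ∂μ) :
    eqLaw 1 1 (sumLaw μ n)
      = ((n : ENNReal))⁻¹ • ∑ i ∈ Finset.range n, mconv (sumLaw μ i) (eqLaw 1 1 μ) := by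
  have hμ : ∀ᵐ x ∂μ, 0 ≤ x := by simpa [ae_iff, Iio] using hsupp
  have hS := ae_nonneg_sumLaw hμ n
  have hmeanS : 0 < ∫ x, x ∂(sumLaw μ n) := by
    rw [integral_eq_lintegral_of_nonneg_ae hS aestronglyMeasurable_id, lintegral_ofReal_sumLaw hμ,
      ENNReal.toReal_mul, ← integral_eq_lintegral_of_nonneg_ae hμ aestronglyMeasurable_id]
    simp only [ENNReal.toReal_natCast]
    exact mul_pos (by exact_mod_cast hn) hmean
  ext A hA
  rw [eqLaw_one_apply hS hmeanS hA, lintegral_volume_inter_Ioc_sumLaw hμ hA,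
    lintegral_ofReal_sumLaw hμ, Measure.smul_apply, Measure.finsetSum_apply,
    Finset.sum_congr rfl fun i _ => mconv_eqLaw_one_apply (sumLaw μ i) hμ hmean hA,
    ← Finset.mul_sum, ENNReal.mul_inv (Or.inr (lintegral_ofReal_pos_and_lt_top hμ hmean).2.ne)
      (Or.inl (ENNReal.natCast_ne_top n)), smul_eq_mul, mul_assoc]
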